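/- There exists an absolute constant c′ ∈ (0,1) such that for all integers 1 ≤ r ≤ k ≤ c′·p₁ with r ≤ p₂ and every ε > 0, there exists a finite set 𝕏′ of real p₁×p₂ matrices with the following properties: (i) every X ∈ 𝕏′ has at most k nonzero rows, rank(X) ≤ r, and ‖X‖_F = ε; (ii) log|𝕏′| ≥ (4/25)·k·log(p₁/k) + (3/25)·r·p₂; (iii) ‖X₁ − X₂‖_F ≥ ε/2 for all distinct X₁, X₂ ∈ 𝕏′. -/

import Mathlib

noncomputable section
open MeasureTheory

/-- Frobenius norm of a real matrix. -/
def frobNorm {a b : ℕ} (X : Matrix (Fin a) (Fin b) ℝ) : ℝ :=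
  Real.sqrt (∑ i, ∑ j, (X i j) ^ 2)

/-- Euclidean norm of a vector. -/
def l2Norm {n : ℕ} (v : Fin n → ℝ) : ℝ :=
  Real.sqrt (∑ i, (v i) ^ 2)

/-- Sum of Euclidean norms of the rows (ℓ_{1,2} norm). -/
def l12Norm {a b : ℕ} (X : Matrix (Fin a) (Fin b) ℝ) : ℝ :=
  ∑ i, Real.sqrt (∑ j, (X i j) ^ 2)

/-- Nuclear norm: sum of the singular values of `X`. -/
def nuclearNorm {a b : ℕ} (X : Matrix (Fin a) (Fin b) ℝ) : ℝ :=
  ∑ i, Real.sqrt ((show (X.transpose * X).IsHermitian by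
    simpa [Matrix.conjTranspose_eq_transpose_of_trivial] using
      Matrix.isHermitian_conjTranspose_mul_self X).eigenvalues i)

/-- Spectral norm (ℓ₂ operator norm). -/
def specNorm {a b : ℕ} (X : Matrix (Fin a) (Fin b) ℝ) : ℝ :=
  sSup ((fun v => l2Norm (X.mulVec v)) '' {v | l2Norm v ≤ 1})

/-- Number of nonzero rows. -/
def rowSparsity {a b : ℕ} (X : Matrix (Fin a) (Fin b) ℝ) : ℕ :=
  {i | X i ≠ 0}.ncard

/-- The set 𝕏_{k,r} of matrices with at most `k` nonzero rows and rank at most `r`. -/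
def sparseLowRank (p₁ p₂ k r : ℕ) : Set (Matrix (Fin p₁) (Fin p₂) ℝ) :=
  {X | rowSparsity X ≤ k ∧ X.rank ≤ r}

/-- Gaussian measure on ℝⁿ with mean `μ` and covariance `σ² Iₙ`. -/
def gaussianPi (n : ℕ) (μ : Fin n → ℝ) (σ : ℝ) : Measure (Fin n → ℝ) :=
  Measure.pi fun i => ProbabilityTheory.gaussianReal (μ i) (Real.toNNReal (σ ^ 2))

/-!
A Gilbert–Varshamov code `𝒮` of `k`-subsets of the rows, any two differing in at least `k / 4`
elements, is paired with a binary code `𝒯` of `r × p₂` sign patterns, any two differing in at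
least `r p₂ / 8` entries. Both come from the greedy bound `|code| ≥ |Ω| / |Hamming ball|`, and a
Hamming ball of radius `t` in `n` coordinates has at most `(1 + x) ^ n / x ^ t` points.

The matrix attached to `(S, T)` fills row `i ∈ S` with row `ρ_S i` of the `±a` sign matrix of `T`,
where `ρ_S` splits `S` into `r` classes of size at least `⌊k / r⌋`; it has rank at most `r` and
squared Frobenius norm `k p₂ a² = ε²`. Two such matrices with different supports differ in at least
`k / 4` full rows; with equal supports every differing sign is repeated `⌊k / r⌋ ≥ k / (2r)`
times. Either way the squared distance is at least `k p₂ a² / 4`.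
-/

open Finset Real
open scoped symmDiff

theorem Nat.pow_le_pow_mul_choose {n k : ℕ} (hkn : k ≤ n) : n ^ k ≤ k ^ k * n.choose k := by
  have hprod : n ^ k * k.descFactorial k ≤ k ^ k * n.descFactorial k := by
    simp only [Nat.descFactorial_eq_prod_range]
    calc n ^ k * ∏ i ∈ range k, (k - i) = ∏ i ∈ range k, n * (k - i) := by
          rw [prod_mul_distrib, prod_const, card_range]
      _ ≤ ∏ i ∈ range k, k * (n - i) := prod_le_prod' fun i hi => by
          have : k * i ≤ n * i := Nat.mul_le_mul_right i hkn
          rw [Nat.mul_sub, Nat.mul_sub, Nat.mul_comm k n]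
          omega
      _ = k ^ k * ∏ i ∈ range k, (n - i) := by rw [prod_mul_distrib, prod_const, card_range]
  rw [Nat.descFactorial_self, Nat.descFactorial_eq_factorial_mul_choose, mul_left_comm,
    mul_comm (n ^ k)] at hprod
  exact Nat.le_of_mul_le_mul_left hprod k.factorial_pos

theorem pos_of_pow_mul_le {x A B : ℝ} {t n : ℕ} (hx : 0 < x) (hA : 0 < A)
    (h : x ^ t * A ≤ (1 + x) ^ n * B) : 0 < B :=
  pos_of_mul_pos_right ((by positivity : 0 < x ^ t * A).trans_le h) (by positivity)

theorem log_add_mul_log_le_of_pow_mul_le {x A B : ℝ} {t n : ℕ} (hx : 0 < x) (hA : 0 < A)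
    (h : x ^ t * A ≤ (1 + x) ^ n * B) : log A + t * log x ≤ n * x + log B := by
  have hB := pos_of_pow_mul_le hx hA h
  have hlog := log_le_log (by positivity) h
  rw [log_mul (by positivity) hA.ne', log_mul (by positivity) hB.ne', log_pow, log_pow] at hlog
  have : log (1 + x) ≤ x := by linarith [log_le_sub_one_of_pos (by positivity : 0 < 1 + x)]
  nlinarith [(Nat.cast_nonneg n : (0 : ℝ) ≤ n)]

section Codes

variable {α : Type*}

theorem pow_mul_card_filter_card_le (U : Finset α) (t : ℕ) {x : ℝ} (hx₀ : 0 ≤ x)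
    (hx₁ : x ≤ 1) : x ^ t * #{T ∈ U.powerset | #T ≤ t} ≤ (1 + x) ^ #U := by
  calc x ^ t * #{T ∈ U.powerset | #T ≤ t}
      = ∑ T ∈ U.powerset with #T ≤ t, x ^ t := by simp [mul_comm]
    _ ≤ ∑ T ∈ U.powerset with #T ≤ t, x ^ #T :=
        sum_le_sum fun T hT => pow_le_pow_of_le_one hx₀ hx₁ (mem_filter.1 hT).2
    _ ≤ ∑ T ∈ U.powerset, x ^ #T * 1 ^ (#U - #T) := by
        simp only [one_pow, mul_one]
        exact sum_le_sum_of_subset_of_nonneg (filter_subset _ _) fun _ _ _ => by positivity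
    _ = (1 + x) ^ #U := by rw [sum_pow_mul_eq_add_pow, add_comm]

theorem exists_pairwise_not_rel_card_le_mul (R : α → α → Prop) [DecidableRel R]
    (hsymm : ∀ x y, R x y → R y x) (hrefl : ∀ x, R x x) (Ω : Finset α) {B : ℕ}
    (hB : ∀ x, #{y ∈ Ω | R x y} ≤ B) :
    ∃ C ⊆ Ω, #Ω ≤ B * #C ∧ (C : Set α).Pairwise fun x y => ¬ R x y := by
  classical
  obtain ⟨C, hC, hmax⟩ := exists_max_image
    (Ω.powerset.filter fun C : Finset α => (C : Set α).Pairwise fun x y => ¬ R x y) card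
    ⟨∅, by simp⟩
  rw [mem_filter, mem_powerset] at hC
  refine ⟨C, hC.1, ?_, hC.2⟩
  have hcover : Ω ⊆ C.biUnion fun x => {y ∈ Ω | R x y} := by
    intro y hy
    by_contra hyC
    simp only [mem_biUnion, mem_filter, not_exists, not_and, hy, true_and] at hyC
    have hy' : y ∉ C := fun h => hyC y h (hrefl y)
    have := hmax (insert y C) <| by
      rw [mem_filter, mem_powerset, coe_insert]
      exact ⟨insert_subset hy hC.1,
        hC.2.insert fun x hx _ => ⟨fun h => hyC x hx (hsymm _ _ h), hyC x hx⟩⟩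
    rw [card_insert_of_notMem hy'] at this
    omega
  calc #Ω ≤ ∑ x ∈ C, #{y ∈ Ω | R x y} := (card_le_card hcover).trans card_biUnion_le
    _ ≤ ∑ _x ∈ C, B := sum_le_sum fun x _ => hB x
    _ = B * #C := by rw [sum_const, smul_eq_mul, mul_comm]

variable [DecidableEq α] [Fintype α]

theorem exists_code_lt_card_symmDiff (Ω : Finset (Finset α)) (t : ℕ)
    {x : ℝ} (hx₀ : 0 ≤ x) (hx₁ : x ≤ 1) :
    ∃ C ⊆ Ω, x ^ t * #Ω ≤ (1 + x) ^ Fintype.card α * #C ∧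
      (C : Set (Finset α)).Pairwise fun S T => t < #(S ∆ T) := by
  have hball : ∀ S, #{T ∈ Ω | #(S ∆ T) ≤ t} ≤ #{T ∈ (univ : Finset α).powerset | #T ≤ t} :=
    fun S => card_le_card_of_injOn (S ∆ ·) (fun T hT => by simp_all)
      fun T _ T' _ h => symmDiff_right_injective S h
  obtain ⟨C, hCΩ, hcard, hC⟩ := exists_pairwise_not_rel_card_le_mul (fun S T => #(S ∆ T) ≤ t)
    (fun S T h => by rwa [symmDiff_comm]) (fun S => by simp) Ω hball
  refine ⟨C, hCΩ, ?_, fun S hS T hT hST => not_le.1 (hC hS hT hST)⟩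
  have hB := pow_mul_card_filter_card_le (univ : Finset α) t hx₀ hx₁
  rw [card_univ] at hB
  calc x ^ t * #Ω ≤ x ^ t * (#{T ∈ (univ : Finset α).powerset | #T ≤ t} * #C) := by
        gcongr; exact_mod_cast hcard
    _ = x ^ t * #{T ∈ (univ : Finset α).powerset | #T ≤ t} * #C := by ring
    _ ≤ (1 + x) ^ Fintype.card α * #C := by gcongr

theorem exists_constantWeight_code {k : ℕ} (hk : 1 ≤ k) (hkn : 8 * k ≤ Fintype.card α) :
    ∃ 𝒮 : Finset (Finset α), 𝒮.Nonempty ∧ (∀ S ∈ 𝒮, #S = k) ∧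
      (𝒮 : Set (Finset α)).Pairwise (fun S T => k ≤ 4 * #(S ∆ T)) ∧
      4 / 25 * k * log (Fintype.card α / k) ≤ log #𝒮 := by
  set n := Fintype.card α
  have hk₀ : (0 : ℝ) < k := by exact_mod_cast hk
  have hkn' : (8 : ℝ) * k ≤ n := by exact_mod_cast hkn
  have hn₀ : (0 : ℝ) < n := by linarith
  obtain ⟨𝒮, h𝒮Ω, hcard, hsep⟩ := exists_code_lt_card_symmDiff ((univ : Finset α).powersetCard k)
    ((k - 1) / 4) (x := k / n) (by positivity) (div_le_one_of_le₀ (by linarith) hn₀.le)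
  have hΩ : (n / k : ℝ) ^ k ≤ #((univ : Finset α).powersetCard k) := by
    rw [card_powersetCard, card_univ, div_pow, div_le_iff₀ (by positivity)]
    exact_mod_cast (Nat.pow_le_pow_mul_choose (by omega)).trans_eq (mul_comm _ _)
  have hcard' := hcard.trans' (mul_le_mul_of_nonneg_left hΩ (by positivity))
  have h𝒮 : (0 : ℝ) < #𝒮 := pos_of_pow_mul_le (by positivity) (by positivity) hcard'
  refine ⟨𝒮, card_pos.1 (by exact_mod_cast h𝒮), fun S hS => (mem_powersetCard.1 (h𝒮Ω hS)).2,
    fun S hS T hT hST => by have := hsep hS hT hST; omega, ?_⟩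
  -- `(n / k) ^ (k - t) ≤ e ^ k * #𝒮` with `4 t < k`, and `(3 / 4) L - 1 ≥ (4 / 25) L` once `L ≥ 2`
  have hlog := log_add_mul_log_le_of_pow_mul_le (by positivity) (by positivity) hcard'
  set L := log (n / k)
  have hL : 2 ≤ L := by
    have h8 : log 8 ≤ L := log_le_log (by norm_num) (by rw [le_div_iff₀ hk₀]; linarith)
    have : log 8 = 3 * log 2 := by rw [show (8 : ℝ) = 2 ^ 3 by norm_num, log_pow]; norm_num
    linarith [log_two_gt_d9]
  have ht : (4 : ℝ) * ((k - 1) / 4 : ℕ) ≤ k := by exact_mod_cast (by omega : 4 * ((k - 1) / 4) ≤ k)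
  rw [log_pow, show log (k / n : ℝ) = -L by rw [← log_inv, inv_div],
    mul_div_cancel₀ _ hn₀.ne'] at hlog
  nlinarith

theorem exists_binary_code :
    ∃ 𝒯 : Finset (Finset α), 𝒯.Nonempty ∧
      (𝒯 : Set (Finset α)).Pairwise (fun S T => Fintype.card α ≤ 8 * #(S ∆ T)) ∧
      3 / 25 * Fintype.card α ≤ log #𝒯 := by
  set n := Fintype.card α
  obtain ⟨𝒯, -, hcard, hsep⟩ := exists_code_lt_card_symmDiff (univ : Finset (Finset α))
    ((n - 1) / 8) (x := 1 / 8) (by norm_num) (by norm_num)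
  have h𝒯 : (0 : ℝ) < #𝒯 := pos_of_pow_mul_le (by norm_num) (by positivity) hcard
  refine ⟨𝒯, card_pos.1 (by exact_mod_cast h𝒯),
    fun S hS T hT hST => by have := hsep hS hT hST; omega, ?_⟩
  -- `log #𝒯 ≥ n log 2 - 3 t log 2 - n / 8` with `8 t ≤ n`
  have hlog := log_add_mul_log_le_of_pow_mul_le (by norm_num) (by positivity) hcard
  rw [card_univ, Fintype.card_finset, Nat.cast_pow, log_pow, Nat.cast_ofNat,
    one_div, log_inv, show (8 : ℝ) = 2 ^ 3 by norm_num, log_pow] at hlog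
  have ht : (8 : ℝ) * ((n - 1) / 8 : ℕ) ≤ n := by exact_mod_cast (by omega : 8 * ((n - 1) / 8) ≤ n)
  nlinarith [log_two_gt_d9, log_two_lt_d9]

end Codes

section Labelling

variable {ι κ : Type*}

theorem exists_div_le_card_fiber (S : Finset ι) {r : ℕ} (hr : 0 < r) :
    ∃ ρ : ι → Fin r, ∀ g, #S / r ≤ #{i ∈ S | ρ i = g} := by
  classical
  let e := S.equivFin
  refine ⟨fun i => if h : i ∈ S then ⟨e ⟨i, h⟩ % r, Nat.mod_lt _ hr⟩ else ⟨0, hr⟩, fun g => ?_⟩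
  have hslot : ∀ q : Fin (#S / r), (q : ℕ) * r + g < #S := fun q => by
    have h₁ : ((q : ℕ) + 1) * r ≤ #S / r * r := Nat.mul_le_mul_right r q.2
    have h₂ := Nat.div_mul_le_self #S r
    nlinarith [g.2]
  calc #S / r = #(univ : Finset (Fin (#S / r))) := by simp
    _ ≤ #{i ∈ S | _} := card_le_card_of_injOn (fun q => (e.symm ⟨q * r + g, hslot q⟩ : ι))
        (fun q _ => by simp [Nat.mul_add_mod_of_lt g.2])
        (fun q _ q' _ h => Fin.ext <| Nat.eq_of_mul_eq_mul_right hr <| by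
          simpa using e.symm.injective (Subtype.ext h))

theorem mul_sum_le_sum_comp_of_le_card_fiber [Fintype κ] [DecidableEq κ] (S : Finset ι)
    (ρ : ι → κ) {F : κ → ℝ} (hF : ∀ g, 0 ≤ F g) {q : ℕ}
    (hρ : ∀ g, q ≤ #{i ∈ S | ρ i = g}) : q * ∑ g, F g ≤ ∑ i ∈ S, F (ρ i) := by
  rw [← sum_fiberwise S ρ fun i => F (ρ i), mul_sum]
  refine sum_le_sum fun g _ => ?_
  rw [sum_congr rfl fun i hi => congrArg F (mem_filter.1 hi).2, sum_const, nsmul_eq_mul]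
  exact mul_le_mul_of_nonneg_right (by exact_mod_cast hρ g) (hF g)

end Labelling

section RowPattern

variable {m n : ℕ} {κ : Type*}

def rowPattern (S : Finset (Fin m)) (ρ : Fin m → κ) (Q : Matrix κ (Fin n) ℝ) :
    Matrix (Fin m) (Fin n) ℝ :=
  Matrix.of fun i j => if i ∈ S then Q (ρ i) j else 0

@[simp]
theorem rowPattern_apply (S : Finset (Fin m)) (ρ : Fin m → κ) (Q : Matrix κ (Fin n) ℝ) (i j) :
    rowPattern S ρ Q i j = if i ∈ S then Q (ρ i) j else 0 := rfl

theorem rowSparsity_rowPattern_le (S : Finset (Fin m)) (ρ : Fin m → κ) (Q : Matrix κ (Fin n) ℝ) :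
    rowSparsity (rowPattern S ρ Q) ≤ #S := by
  refine (Set.ncard_le_ncard (fun i hi => ?_) S.finite_toSet).trans (Set.ncard_coe_finset S).le
  by_contra hiS
  rw [mem_coe] at hiS
  exact hi (funext fun j => by simp [hiS])

theorem rank_rowPattern_le [Fintype κ] (S : Finset (Fin m)) (ρ : Fin m → κ)
    (Q : Matrix κ (Fin n) ℝ) : (rowPattern S ρ Q).rank ≤ Fintype.card κ := by
  have : rowPattern S ρ Q =
      Matrix.diagonal (fun i => if i ∈ S then (1 : ℝ) else 0) * Q.submatrix ρ id := by
    ext i j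
    simp
  rw [this]
  exact (Matrix.rank_mul_le_right _ _).trans
    ((Matrix.rank_submatrix_le Q ρ id).trans Q.rank_le_card_height)

theorem rowPattern_sub (S : Finset (Fin m)) (ρ : Fin m → κ) (Q₁ Q₂ : Matrix κ (Fin n) ℝ) :
    rowPattern S ρ Q₁ - rowPattern S ρ Q₂ = rowPattern S ρ (Q₁ - Q₂) := by
  ext i j
  by_cases hi : i ∈ S <;> simp [hi]

theorem sum_sq_rowPattern (S : Finset (Fin m)) (ρ : Fin m → κ) (Q : Matrix κ (Fin n) ℝ) :
    ∑ i, ∑ j, rowPattern S ρ Q i j ^ 2 = ∑ i ∈ S, ∑ j, Q (ρ i) j ^ 2 := by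
  simp [apply_ite (· ^ 2), sum_ite_mem]

theorem card_symmDiff_mul_le_sum_sq_sub {S₁ S₂ : Finset (Fin m)} (ρ₁ ρ₂ : Fin m → κ)
    {Q₁ Q₂ : Matrix κ (Fin n) ℝ} {c : ℝ} (hQ₁ : ∀ g, ∑ j, Q₁ g j ^ 2 = c)
    (hQ₂ : ∀ g, ∑ j, Q₂ g j ^ 2 = c) :
    #(S₁ ∆ S₂) * c ≤ ∑ i, ∑ j, (rowPattern S₁ ρ₁ Q₁ - rowPattern S₂ ρ₂ Q₂) i j ^ 2 := by
  have hrow : ∀ i ∈ S₁ ∆ S₂, ∑ j, (rowPattern S₁ ρ₁ Q₁ - rowPattern S₂ ρ₂ Q₂) i j ^ 2 = c := by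
    intro i hi
    rcases mem_symmDiff.1 hi with ⟨h₁, h₂⟩ | ⟨h₂, h₁⟩ <;> simp [h₁, h₂, hQ₁, hQ₂]
  calc #(S₁ ∆ S₂) * c
      = ∑ i ∈ S₁ ∆ S₂, ∑ j, (rowPattern S₁ ρ₁ Q₁ - rowPattern S₂ ρ₂ Q₂) i j ^ 2 := by
        rw [sum_congr rfl hrow, sum_const, nsmul_eq_mul]
    _ ≤ _ := sum_le_sum_of_subset_of_nonneg (subset_univ _) fun _ _ _ => by positivity

end RowPattern

section SignMatrix

variable {κ ν : Type*} [DecidableEq κ] [DecidableEq ν]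

def signMatrix (a : ℝ) (T : Finset (κ × ν)) : Matrix κ ν ℝ :=
  Matrix.of fun g j => if (g, j) ∈ T then a else -a

theorem sum_sq_signMatrix_row [Fintype ν] (a : ℝ) (T : Finset (κ × ν)) (g : κ) :
    ∑ j, signMatrix a T g j ^ 2 = Fintype.card ν * a ^ 2 := by
  simp [signMatrix, apply_ite (· ^ 2)]

theorem sum_sq_signMatrix_sub [Fintype κ] [Fintype ν] (a : ℝ) (T₁ T₂ : Finset (κ × ν)) :
    ∑ g, ∑ j, (signMatrix a T₁ - signMatrix a T₂) g j ^ 2 = #(T₁ ∆ T₂) * (4 * a ^ 2) := by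
  have hentry : ∀ x : κ × ν, (signMatrix a T₁ - signMatrix a T₂) x.1 x.2 ^ 2 =
      if x ∈ T₁ ∆ T₂ then 4 * a ^ 2 else 0 := fun x => by
    by_cases h₁ : x ∈ T₁ <;> by_cases h₂ : x ∈ T₂ <;> simp [signMatrix, mem_symmDiff, h₁, h₂] <;>
      ring
  rw [← Fintype.sum_prod_type', sum_congr rfl fun x _ => hentry x, sum_ite_mem, univ_inter,
    sum_const, nsmul_eq_mul]

end SignMatrix

section Packing

variable {p₁ p₂ r : ℕ} (ρ : Finset (Fin p₁) → Fin p₁ → Fin r) (a : ℝ)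

def packingMatrix (x : Finset (Fin p₁) × Finset (Fin r × Fin p₂)) : Matrix (Fin p₁) (Fin p₂) ℝ :=
  rowPattern x.1 (ρ x.1) (signMatrix a x.2)

theorem frobNorm_packingMatrix (x : Finset (Fin p₁) × Finset (Fin r × Fin p₂)) :
    frobNorm (packingMatrix ρ a x) = √(#x.1 * (p₂ * a ^ 2)) := by
  simp [frobNorm, packingMatrix, sum_sq_signMatrix_row]

theorem frobNorm_packingMatrix_sub_ge {k : ℕ} (hr : 0 < r) (hrk : r ≤ k)
    (hρ : ∀ S g, #S / r ≤ #{i ∈ S | ρ S i = g}) {x y : Finset (Fin p₁) × Finset (Fin r × Fin p₂)}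
    (hx : #x.1 = k) (hS : x.1 ≠ y.1 → k ≤ 4 * #(x.1 ∆ y.1))
    (hT : x.2 ≠ y.2 → r * p₂ ≤ 8 * #(x.2 ∆ y.2)) (hxy : x ≠ y) :
    √(k * (p₂ * a ^ 2)) / 2 ≤ frobNorm (packingMatrix ρ a x - packingMatrix ρ a y) := by
  rw [frobNorm, le_sqrt (by positivity) (by positivity), div_pow, sq_sqrt (by positivity)]
  by_cases hxy₁ : x.1 = y.1
  · have hD := hT fun h => hxy (Prod.ext hxy₁ h)
    have hq : k ≤ 2 * (r * (k / r)) := by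
      have := Nat.div_add_mod k r
      have := Nat.mod_lt k hr
      have := Nat.le_mul_of_pos_right r (Nat.div_pos hrk hr)
      omega
    have hq' : (k : ℝ) ≤ 2 * (r * (k / r : ℕ)) := by exact_mod_cast hq
    have hD' : (r : ℝ) * p₂ ≤ 8 * #(x.2 ∆ y.2) := by exact_mod_cast hD
    calc (k : ℝ) * (p₂ * a ^ 2) / 2 ^ 2 ≤ (k / r : ℕ) * (#(x.2 ∆ y.2) * (4 * a ^ 2)) := by
          nlinarith [mul_le_mul_of_nonneg_right hq' (by positivity : (0 : ℝ) ≤ p₂ * a ^ 2),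
            mul_le_mul_of_nonneg_left hD' (by positivity : (0 : ℝ) ≤ (k / r : ℕ) * a ^ 2)]
      _ = (#x.1 / r : ℕ) * ∑ g, ∑ j, (signMatrix a x.2 - signMatrix a y.2) g j ^ 2 := by
          rw [sum_sq_signMatrix_sub, hx]
      _ ≤ ∑ i ∈ x.1, ∑ j, (signMatrix a x.2 - signMatrix a y.2) (ρ x.1 i) j ^ 2 :=
          mul_sum_le_sum_comp_of_le_card_fiber x.1 (ρ x.1) (fun g => by positivity) (hρ x.1)
      _ = _ := by rw [packingMatrix, packingMatrix, ← hxy₁, rowPattern_sub, sum_sq_rowPattern]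
  · have hD' : (k : ℝ) ≤ 4 * #(x.1 ∆ y.1) := by exact_mod_cast hS hxy₁
    calc (k : ℝ) * (p₂ * a ^ 2) / 2 ^ 2 ≤ #(x.1 ∆ y.1) * (p₂ * a ^ 2) := by
          nlinarith [mul_le_mul_of_nonneg_right hD' (by positivity : (0 : ℝ) ≤ p₂ * a ^ 2)]
      _ ≤ _ := card_symmDiff_mul_le_sum_sq_sub _ _
          (fun g => by simp [sum_sq_signMatrix_row]) (fun g => by simp [sum_sq_signMatrix_row])

end Packing

theorem injOn_of_le_frobNorm_sub {β : Type*} {a b : ℕ} {s : Set β}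
    {f : β → Matrix (Fin a) (Fin b) ℝ} {δ : ℝ} (hδ : 0 < δ)
    (h : ∀ x ∈ s, ∀ y ∈ s, x ≠ y → δ ≤ frobNorm (f x - f y)) : Set.InjOn f s := by
  intro x hx y hy hfxy
  by_contra hxy
  have := h x hx y hy hxy
  simp [hfxy, frobNorm] at this
  linarith

/-- existence of the packing set 𝕏′. -/
theorem packing_set_row_partition :
    ∃ c' : ℝ, 0 < c' ∧ c' < 1 ∧
    ∀ (p₁ p₂ k r : ℕ), 1 ≤ r → r ≤ k → (k : ℝ) ≤ c' * p₁ → r ≤ p₂ →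
    ∀ ε : ℝ, 0 < ε →
    ∃ 𝕏' : Finset (Matrix (Fin p₁) (Fin p₂) ℝ),
      (∀ X ∈ 𝕏', rowSparsity X ≤ k ∧ X.rank ≤ r ∧ frobNorm X = ε) ∧
      Real.log 𝕏'.card ≥ (4 / 25) * k * Real.log (p₁ / k) + (3 / 25) * r * p₂ ∧
      ∀ X₁ ∈ 𝕏', ∀ X₂ ∈ 𝕏', X₁ ≠ X₂ → frobNorm (X₁ - X₂) ≥ ε / 2 := by
  refine ⟨1 / 8, by norm_num, by norm_num, fun p₁ p₂ k r hr hrk hkp hrp ε hε => ?_⟩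
  have h8k : 8 * k ≤ Fintype.card (Fin p₁) := by
    rw [Fintype.card_fin]; exact_mod_cast (by push_cast; linarith : ((8 * k : ℕ) : ℝ) ≤ p₁)
  obtain ⟨𝒮, h𝒮, h𝒮k, h𝒮sep, h𝒮log⟩ := exists_constantWeight_code (hr.trans hrk) h8k
  obtain ⟨𝒯, h𝒯, h𝒯sep, h𝒯log⟩ := exists_binary_code (α := Fin r × Fin p₂)
  choose ρ hρ using fun S : Finset (Fin p₁) => exists_div_le_card_fiber S hr
  set a := ε / √(k * p₂)
  have ha : √(k * (p₂ * a ^ 2)) = ε := by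
    have hkp₂ : (0 : ℝ) < k * p₂ := by have := hr.trans hrp; have := hr.trans hrk; positivity
    rw [div_pow, sq_sqrt hkp₂.le, ← mul_assoc, mul_div_cancel₀ _ hkp₂.ne', sqrt_sq hε.le]
  have hsep : ∀ x ∈ 𝒮 ×ˢ 𝒯, ∀ y ∈ 𝒮 ×ˢ 𝒯, x ≠ y →
      ε / 2 ≤ frobNorm (packingMatrix ρ a x - packingMatrix ρ a y) := fun x hx y hy hxy => by
    rw [mem_product] at hx hy
    exact ha ▸ frobNorm_packingMatrix_sub_ge ρ a hr hrk hρ (h𝒮k _ hx.1)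
      (h𝒮sep hx.1 hy.1) (by simpa using h𝒯sep hx.2 hy.2) hxy
  refine ⟨(𝒮 ×ˢ 𝒯).image (packingMatrix ρ a), ?_, ?_, ?_⟩
  · simp only [mem_image]
    rintro _ ⟨x, hx, rfl⟩
    have hx₁ := h𝒮k _ (mem_product.1 hx).1
    exact ⟨hx₁ ▸ rowSparsity_rowPattern_le _ _ _, (rank_rowPattern_le _ _ _).trans_eq (by simp),
      by rw [frobNorm_packingMatrix, hx₁, ha]⟩
  · rw [card_image_of_injOn (injOn_of_le_frobNorm_sub (by positivity) hsep), card_product,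
      Nat.cast_mul, log_mul (by positivity) (by positivity)]
    simp only [Fintype.card_prod, Fintype.card_fin, Nat.cast_mul] at h𝒮log h𝒯log
    linarith
  · simp only [mem_image]
    rintro _ ⟨x, hx, rfl⟩ _ ⟨y, hy, rfl⟩ hne
    exact hsep x hx y hy (ne_of_apply_ne _ hne)
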